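/- ('Unzipping' equivalence.) Let A, B : I → ℕ be cost functions, each satisfying the bounded-shared-cost property. Let f : I → I be a natural surjective mapping that is not injective; that is: f is surjective, every fiber f ⁻¹' {y} is finite, for every m : ℕ the set {y : I | the fiber f ⁻¹' {y} has exactly m elements} is either empty or infinite, and f is not injective. If A x ≤ B (f x) for every x : I, then A is strictly better than B under cyclic analysis: (i) there exists a bijection g : I ≃ I with A x ≤ B (g x) for all x : I, and (ii) there is no bijection h : I ≃ I with B x ≤ A (h x) for all x : I. -/

import Mathlib

/-!
A section `σ` of the surjection `f` is an injection with `A ∘ σ ≤ B`. Since the sublevel sets of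
`B` are finite, every cost `A x` is exceeded by `B` on all but finitely many inputs, so along an
enumeration of `I` one also finds an injection `F` with `A ≤ B ∘ F`. The Schröder–Bernstein
bijection built from `F` and `σ` agrees pointwise with one of them, hence `A ≼c B`.

Conversely, a bijection `π` with `B ≤ A ∘ π` forces `#{A ≤ n} ≤ #{B ≤ n}` for all `n`. But `σ`
injects `{B ≤ n}` into `{A ≤ n}`, and for `n = B (f x₁)`, where `f x₁ = f x₂` with `x₁ ≠ x₂`, its
image misses `x₁` or `x₂`, so `#{B ≤ n} < #{A ≤ n}`.
-/

open Function Filter Set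

section CyclicAnalysis

variable {I : Type*}

def CyclicLE (A B : I → ℕ) : Prop := ∃ π : I ≃ I, ∀ x, A x ≤ B (π x)

lemma cyclicLE_of_injective {A B : I → ℕ} {F G : I → I} (hF : Injective F) (hG : Injective G)
    (hAF : ∀ x, A x ≤ B (F x)) (hGB : ∀ y, A (G y) ≤ B y) : CyclicLE A B := by
  obtain ⟨π, hπ, hAπ⟩ :=
    Embedding.schroeder_bernstein_of_rel hF hG (fun x y => A x ≤ B y) hAF hGB
  exact ⟨Equiv.ofBijective π hπ, hAπ⟩

lemma CyclicLE.ncard_setOf_le {A B : I → ℕ} (h : CyclicLE A B)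
    (hA : ∀ n, {x | A x ≤ n}.Finite) (n : ℕ) :
    {y | B y ≤ n}.ncard ≤ {x | A x ≤ n}.ncard := by
  obtain ⟨π, hπ⟩ := h
  refine ncard_le_ncard_of_injOn π.symm (fun y hy => ?_) π.symm.injective.injOn (hA n)
  calc A (π.symm y) ≤ B (π (π.symm y)) := hπ _
    _ = B y := by rw [π.apply_symm_apply]
    _ ≤ n := hy

end CyclicAnalysis

lemma finite_setOf_le_of_finite_fibers {α : Type*} {A : α → ℕ}
    (hA : ∀ n, {x | A x = n}.Finite) (n : ℕ) : {x | A x ≤ n}.Finite :=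
  (finite_Iic n).preimage' fun k _ => hA k

lemma countable_of_finite_fibers {α β : Type*} [Countable β] {A : α → β}
    (hA : ∀ b, {x | A x = b}.Finite) : Countable α := by
  have (b : β) : Finite {x // A x = b} := (hA b).to_subtype
  exact Countable.of_equiv _ (Equiv.sigmaFiberEquiv A)

lemma exists_injective_le_comp {α β : Type*} [Countable α] [Countable β] [Infinite β]
    (A : α → ℕ) {B : β → ℕ} (hB : ∀ n, {y | B y ≤ n}.Finite) :
    ∃ F : α → β, Injective F ∧ ∀ x, A x ≤ B (F x) := by
  obtain ⟨ι, hι⟩ := Countable.exists_injective_nat α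
  cases nonempty_denumerable β
  let e : ℕ ≃ β := (Denumerable.eqv β).symm
  have eventually_le (c : ℕ) : ∀ᶠ k in atTop, c ≤ B (e k) := by
    rw [← Nat.cofinite_eq_atTop]
    have hlt : (e ⁻¹' {y | B y < c}).Finite :=
      ((hB c).subset fun _ (hy : _ < c) => hy.le).preimage e.injective.injOn
    filter_upwards [hlt.eventually_cofinite_notMem] with k hk using not_lt.1 hk
  obtain ⟨φ, hφ, hAφ⟩ := extraction_forall_of_eventually
    (P := fun n k => ∀ x ∈ ι ⁻¹' {n}, A x ≤ B (e k)) fun n =>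
      (eventually_all_finite ((finite_singleton n).preimage hι.injOn)).2
        fun x _ => eventually_le (A x)
  exact ⟨e ∘ φ ∘ ι, e.injective.comp (hφ.injective.comp hι), fun x => hAφ (ι x) x rfl⟩

lemma exists_ncard_setOf_le_lt_of_not_injective {α β : Type*} {A : α → ℕ} {B : β → ℕ}
    {f : α → β} (hA : ∀ n, {x | A x ≤ n}.Finite) (hf : Surjective f) (hninj : ¬ Injective f)
    (hle : ∀ x, A x ≤ B (f x)) : ∃ n, {y | B y ≤ n}.ncard < {x | A x ≤ n}.ncard := by
  obtain ⟨x₁, x₂, hf₁₂, hne⟩ : ∃ x₁ x₂, f x₁ = f x₂ ∧ x₁ ≠ x₂ := by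
    simpa [Injective] using hninj
  set σ := surjInv hf
  have hfσ : ∀ y, f (σ y) = y := surjInv_eq hf
  obtain ⟨x, hfx, hxσ⟩ : ∃ x, f x = f x₁ ∧ x ≠ σ (f x₁) := by
    by_cases h₁ : x₁ = σ (f x₁)
    · exact ⟨x₂, hf₁₂.symm, fun h₂ => hne (h₁.trans h₂.symm)⟩
    · exact ⟨x₁, rfl, h₁⟩
  refine ⟨B (f x₁), ?_⟩
  have hssub : σ '' {y | B y ≤ B (f x₁)} ⊂ {x | A x ≤ B (f x₁)} := by
    refine ⟨?_, fun hsub => ?_⟩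
    · rintro _ ⟨y, hy, rfl⟩
      exact (hle (σ y)).trans (by rwa [hfσ])
    · obtain ⟨y, -, rfl⟩ := hsub (show A x ≤ B (f x₁) from hfx ▸ hle x)
      exact hxσ (by rw [← hfx, hfσ])
  rw [← ncard_image_of_injective _ (injective_surjInv hf)]
  exact ncard_lt_ncard hssub (hA _)

theorem stmt_7_general {I : Type*} (A B : I → ℕ)
    (hA : ∀ n : ℕ, {x : I | A x = n}.Finite)
    (hB : ∀ n : ℕ, {x : I | B x = n}.Finite)
    (f : I → I) (hsurj : Function.Surjective f)
    (hninj : ¬ Function.Injective f)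
    (hle : ∀ x : I, A x ≤ B (f x)) :
    (∃ g : I ≃ I, ∀ x : I, A x ≤ B (g x)) ∧
      ¬ ∃ h : I ≃ I, ∀ x : I, B x ≤ A (h x) := by
  have hA' := finite_setOf_le_of_finite_fibers hA
  have hB' := finite_setOf_le_of_finite_fibers hB
  have : Countable I := countable_of_finite_fibers hA
  have : Infinite I := ⟨fun _ => hninj (Finite.injective_iff_surjective.2 hsurj)⟩
  obtain ⟨F, hF, hAF⟩ := exists_injective_le_comp A hB'
  refine ⟨cyclicLE_of_injective hF (injective_surjInv hsurj) hAF fun y => ?_, fun hBA => ?_⟩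
  · simpa only [surjInv_eq hsurj] using hle (surjInv hsurj y)
  · obtain ⟨n, hn⟩ := exists_ncard_setOf_le_lt_of_not_injective hA' hsurj hninj hle
    exact (CyclicLE.ncard_setOf_le (A := B) (B := A) hBA hB' n).not_gt hn

/-- "unzipping" equivalence: a natural surjective, non-injective
mapping `f` with `A x ≤ B (f x)` everywhere (for cost functions with the
bounded-shared-cost property) shows that `A` is strictly better than `B`
under cyclic analysis. -/
theorem stmt_7 {I : Type*} (A B : I → ℕ)
    (hA : ∀ n : ℕ, {x : I | A x = n}.Finite)
    (hB : ∀ n : ℕ, {x : I | B x = n}.Finite)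
    (f : I → I) (hsurj : Function.Surjective f)
    (hfin : ∀ y : I, (f ⁻¹' {y}).Finite)
    (hnat : ∀ m : ℕ, {y : I | (f ⁻¹' {y}).ncard = m} = ∅ ∨
      {y : I | (f ⁻¹' {y}).ncard = m}.Infinite)
    (hninj : ¬ Function.Injective f)
    (hle : ∀ x : I, A x ≤ B (f x)) :
    (∃ g : I ≃ I, ∀ x : I, A x ≤ B (g x)) ∧
      ¬ ∃ h : I ≃ I, ∀ x : I, B x ≤ A (h x) :=
  stmt_7_general A B hA hB f hsurj hninj hle
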